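/- Under the abstract factorization hypotheses, for all integers N ≥ n ≥ 0 and every f ∈ ker ℒ_n one has ‖ℛ_{N−1}ℛ_{N−2}⋯ℛ_n f‖²_{V_N} = [∏_{h=n}^{N−1} ∑_{k=n}^{h}(b_k − a_k)] · ‖f‖²_{V_n}; in particular, if the constant ∏_{h=n}^{N−1} ∑_{k=n}^{h}(b_k − a_k) is nonzero, then the linear map ker ℒ_n → V_N, f ↦ ℛ_{N−1}ℛ_{N−2}⋯ℛ_n f, is injective. -/

import Mathlib

/-!
Each `f ∈ ker ℒ_n` is an eigenvector of `𝒟_n` with eigenvalue `a_n`, because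
`ℛ_{n-1}ℒ_n = -𝒟_n + a_n`. If `g` is an eigenvector of `𝒟_N` with eigenvalue `μ`, then
`ℒ_{N+1}ℛ_N g = (b_N - μ) g`; hence `‖ℛ_N g‖² = ⟪g, ℒ_{N+1}ℛ_N g⟫ = (b_N - μ)‖g‖²`, and
`ℛ_Nℒ_{N+1} = -𝒟_{N+1} + a_{N+1}` shows that `ℛ_N g` is again an eigenvector, with eigenvalue
`a_{N+1} - (b_N - μ)`. Starting from `μ = a_n`, after `k` raisings the factor `b_{n+k} - μ` equals
`∑_{i=n}^{n+k} (b_i - a_i)`, and the norm identity follows by induction on `k`. A nonzero constant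
then forces `ℛ_{N-1}⋯ℛ_n` to be injective on `ker ℒ_n`.
-/

open scoped ComplexInnerProductSpace

noncomputable section

variable {V : ℕ → Type*} [∀ N, NormedAddCommGroup (V N)] [∀ N, InnerProductSpace ℂ (V N)]

/-- `RIter R n k` is the iterated raising operator
`ℛ_{n+k-1} ∘ ℛ_{n+k-2} ∘ ⋯ ∘ ℛ_n : V n → V (n+k)`. -/
def RIter (R : ∀ N, V N →ₗ[ℂ] V (N + 1)) (n : ℕ) : ∀ k : ℕ, V n →ₗ[ℂ] V (n + k)
  | 0 => LinearMap.id
  | k + 1 => (R (n + k)).comp (RIter R n k)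

/-- `KerL L n f` says `ℒ_n f = 0`, with the convention `ℒ_0 = 0` (so that for `n = 0` every `f`
qualifies).  Here `L N = ℒ_{N+1}`. -/
def KerL (L : ∀ N, V (N + 1) →ₗ[ℂ] V N) : ∀ n : ℕ, V n → Prop
  | 0, _ => True
  | m + 1, f => L m f = 0

section Factorization

variable {D : ∀ N, V N →ₗ[ℂ] V N} {R : ∀ N, V N →ₗ[ℂ] V (N + 1)} {L : ∀ N, V (N + 1) →ₗ[ℂ] V N}
  {a b : ℕ → ℂ}

theorem RIter_succ_apply (n k : ℕ) (f : V n) :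
    RIter R n (k + 1) f = R (n + k) (RIter R n k f) :=
  rfl

theorem KerL.sub {n : ℕ} {f g : V n} (hf : KerL L n f) (hg : KerL L n g) :
    KerL L n (f - g) := by
  cases n with
  | zero => trivial
  | succ m =>
    change L m (f - g) = 0
    rw [map_sub, show L m f = 0 from hf, show L m g = 0 from hg, sub_zero]

theorem apply_eq_smul_of_kerL
    (hRL : ∀ N, (R N).comp (L N) = -(D (N + 1)) + a (N + 1) • LinearMap.id)
    (hD0 : D 0 = a 0 • LinearMap.id) {n : ℕ} {f : V n} (hf : KerL L n f) :
    D n f = a n • f := by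
  cases n with
  | zero => simp [hD0]
  | succ m =>
    have h := LinearMap.congr_fun (hRL m) f
    simp only [LinearMap.comp_apply, LinearMap.add_apply, LinearMap.neg_apply,
      LinearMap.smul_apply, LinearMap.id_apply] at h
    rw [show L m f = 0 from hf, map_zero] at h
    exact neg_add_eq_zero.mp h.symm

theorem lower_raise_of_eigen (hLR : ∀ N, (L N).comp (R N) = -(D N) + b N • LinearMap.id)
    {N : ℕ} {μ : ℂ} {g : V N} (hg : D N g = μ • g) :
    L N (R N g) = (b N - μ) • g := by
  have h := LinearMap.congr_fun (hLR N) g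
  simp only [LinearMap.comp_apply, LinearMap.add_apply, LinearMap.neg_apply,
    LinearMap.smul_apply, LinearMap.id_apply] at h
  rw [h, hg, sub_smul]
  abel

theorem apply_raise_of_eigen
    (hRL : ∀ N, (R N).comp (L N) = -(D (N + 1)) + a (N + 1) • LinearMap.id)
    (hLR : ∀ N, (L N).comp (R N) = -(D N) + b N • LinearMap.id)
    {N : ℕ} {μ : ℂ} {g : V N} (hg : D N g = μ • g) :
    D (N + 1) (R N g) = (a (N + 1) - (b N - μ)) • R N g := by
  have h := LinearMap.congr_fun (hRL N) (R N g)
  simp only [LinearMap.comp_apply, LinearMap.add_apply, LinearMap.neg_apply,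
    LinearMap.smul_apply, LinearMap.id_apply] at h
  rw [lower_raise_of_eigen hLR hg, map_smul] at h
  rw [sub_smul, h]
  abel

theorem inner_raise_self_of_eigen
    (hAdj : ∀ (N : ℕ) (f₁ : V N) (f₂ : V (N + 1)), ⟪R N f₁, f₂⟫ = ⟪f₁, L N f₂⟫)
    (hLR : ∀ N, (L N).comp (R N) = -(D N) + b N • LinearMap.id)
    {N : ℕ} {μ : ℂ} {g : V N} (hg : D N g = μ • g) :
    ⟪R N g, R N g⟫ = (b N - μ) * ⟪g, g⟫ := by
  rw [hAdj, lower_raise_of_eigen hLR hg, inner_smul_right]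

theorem apply_RIter_of_eigen
    (hRL : ∀ N, (R N).comp (L N) = -(D (N + 1)) + a (N + 1) • LinearMap.id)
    (hLR : ∀ N, (L N).comp (R N) = -(D N) + b N • LinearMap.id)
    {n : ℕ} {f : V n} (hf : D n f = a n • f) (k : ℕ) :
    D (n + k) (RIter R n k f) =
      (a (n + k) - ∑ i ∈ Finset.Ico n (n + k), (b i - a i)) • RIter R n k f := by
  induction k with
  | zero => simpa [RIter] using hf
  | succ k ih =>
    show D (n + k + 1) (R (n + k) (RIter R n k f)) =
      (a (n + k + 1) - ∑ i ∈ Finset.Ico n (n + k + 1), (b i - a i)) • R (n + k) (RIter R n k f)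
    rw [apply_raise_of_eigen hRL hLR ih, Finset.sum_Ico_succ_top (Nat.le_add_right n k)]
    ring_nf

theorem sub_RIter_eigenvalue (n k : ℕ) :
    b (n + k) - (a (n + k) - ∑ i ∈ Finset.Ico n (n + k), (b i - a i)) =
      ∑ i ∈ Finset.Icc n (n + k), (b i - a i) := by
  rw [← Finset.Ico_add_one_right_eq_Icc, Finset.sum_Ico_succ_top (Nat.le_add_right n k)]
  ring

theorem inner_RIter_self
    (hAdj : ∀ (N : ℕ) (f₁ : V N) (f₂ : V (N + 1)), ⟪R N f₁, f₂⟫ = ⟪f₁, L N f₂⟫)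
    (hRL : ∀ N, (R N).comp (L N) = -(D (N + 1)) + a (N + 1) • LinearMap.id)
    (hLR : ∀ N, (L N).comp (R N) = -(D N) + b N • LinearMap.id)
    {n : ℕ} {f : V n} (hf : D n f = a n • f) (k : ℕ) :
    ⟪RIter R n k f, RIter R n k f⟫ =
      (∏ h ∈ Finset.Ico n (n + k), ∑ i ∈ Finset.Icc n h, (b i - a i)) * ⟪f, f⟫ := by
  induction k with
  | zero => simp [RIter]
  | succ k ih =>
    rw [RIter_succ_apply, inner_raise_self_of_eigen hAdj hLR (apply_RIter_of_eigen hRL hLR hf k),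
      sub_RIter_eigenvalue, ih, ← add_assoc, Finset.prod_Ico_succ_top (Nat.le_add_right n k)]
    ring

end Factorization

theorem iterated_raising_norm_and_injective_general
    (D : ∀ N, V N →ₗ[ℂ] V N)
    (R : ∀ N, V N →ₗ[ℂ] V (N + 1)) (L : ∀ N, V (N + 1) →ₗ[ℂ] V N)
    (a b : ℕ → ℂ)
    (hAdj : ∀ (N : ℕ) (f₁ : V N) (f₂ : V (N + 1)), ⟪R N f₁, f₂⟫ = ⟪f₁, L N f₂⟫)
    (hRL : ∀ N : ℕ, (R N).comp (L N) = -(D (N + 1)) + a (N + 1) • LinearMap.id)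
    (hLR : ∀ N : ℕ, (L N).comp (R N) = -(D N) + b N • LinearMap.id)
    (hD0 : D 0 = a 0 • LinearMap.id)
    (n k : ℕ) :
    (∀ f : V n, KerL L n f →
        (‖RIter R n k f‖ : ℂ) ^ 2 =
          (∏ h ∈ Finset.Ico n (n + k), ∑ i ∈ Finset.Icc n h, (b i - a i)) * (‖f‖ : ℂ) ^ 2) ∧
    ((∏ h ∈ Finset.Ico n (n + k), ∑ i ∈ Finset.Icc n h, (b i - a i)) ≠ 0 →
      ∀ f g : V n, KerL L n f → KerL L n g → RIter R n k f = RIter R n k g → f = g) := by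
  have norm_sq : ∀ f : V n, KerL L n f →
      (‖RIter R n k f‖ : ℂ) ^ 2 =
        (∏ h ∈ Finset.Ico n (n + k), ∑ i ∈ Finset.Icc n h, (b i - a i)) * (‖f‖ : ℂ) ^ 2 := by
    intro f hf
    have h := inner_RIter_self hAdj hRL hLR (apply_eq_smul_of_kerL hRL hD0 hf) k
    rwa [inner_self_eq_norm_sq_to_K, inner_self_eq_norm_sq_to_K] at h
  refine ⟨norm_sq, fun hne f g hf hg heq => ?_⟩
  have hzero := norm_sq (f - g) (hf.sub hg)
  rw [map_sub, heq, sub_self, norm_zero, Complex.ofReal_zero, zero_pow two_ne_zero,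
    eq_comm, mul_eq_zero] at hzero
  simpa [sub_eq_zero] using hzero.resolve_left hne

/-- Under the abstract factorization hypotheses, for `N = n + k ≥ n ≥ 0` and every
`f ∈ ker ℒ_n` one has
`‖ℛ_{N-1}⋯ℛ_n f‖²_{V_N} = (∏_{h=n}^{N-1} ∑_{k'=n}^{h} (b_{k'} - a_{k'})) ‖f‖²_{V_n}`;
in particular, if the constant `∏_{h=n}^{N-1} ∑_{k'=n}^{h} (b_{k'} - a_{k'})` is nonzero, then
the map `ker ℒ_n → V N`, `f ↦ ℛ_{N-1}⋯ℛ_n f`, is injective. -/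
theorem iterated_raising_norm_and_injective
    [∀ N, FiniteDimensional ℂ (V N)]
    (hdim : ∀ N, Module.finrank ℂ (V N) = N + 1)
    (D : ∀ N, V N →ₗ[ℂ] V N) (hsym : ∀ N, (D N).IsSymmetric)
    (R : ∀ N, V N →ₗ[ℂ] V (N + 1)) (L : ∀ N, V (N + 1) →ₗ[ℂ] V N)
    (a b : ℕ → ℂ)
    (hAdj : ∀ (N : ℕ) (f₁ : V N) (f₂ : V (N + 1)), ⟪R N f₁, f₂⟫ = ⟪f₁, L N f₂⟫)
    (hRL : ∀ N : ℕ, (R N).comp (L N) = -(D (N + 1)) + a (N + 1) • LinearMap.id)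
    (hLR : ∀ N : ℕ, (L N).comp (R N) = -(D N) + b N • LinearMap.id)
    (hD0 : D 0 = a 0 • LinearMap.id)
    (n k : ℕ) :
    (∀ f : V n, KerL L n f →
        (‖RIter R n k f‖ : ℂ) ^ 2 =
          (∏ h ∈ Finset.Ico n (n + k), ∑ i ∈ Finset.Icc n h, (b i - a i)) * (‖f‖ : ℂ) ^ 2) ∧
    ((∏ h ∈ Finset.Ico n (n + k), ∑ i ∈ Finset.Icc n h, (b i - a i)) ≠ 0 →
      ∀ f g : V n, KerL L n f → KerL L n g → RIter R n k f = RIter R n k g → f = g) :=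
  iterated_raising_norm_and_injective_general D R L a b hAdj hRL hLR hD0 n k
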